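/- For each integer k ≥ 2, ν(2/2^k) + 2·ν((2^{k−1}−1)/2^k) = 3·(2^{k−1}−1)/2^{k−1}, where ν(x) = Σ_{d≥1} d·ε_d(x)·2^{-d}. -/
import Mathlib

noncomputable def epsBit (d : ℕ) (x : ℝ) : ℝ := ((⌊2 ^ d * x⌋ % 2 : ℤ) : ℝ)

noncomputable def nu (x : ℝ) : ℝ := ∑' d : ℕ, (d : ℝ) * epsBit d x / 2 ^ d

lemma epsBit_nat_div (n k d : ℕ) :
    epsBit d ((n : ℝ) / 2 ^ k) = ((2 ^ d * n / 2 ^ k) % 2 : ℕ) := by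
  unfold epsBit
  have h0 : (0:ℝ) ≤ 2 ^ d * ((n : ℝ) / 2 ^ k) := by positivity
  have hfl : ⌊(2:ℝ) ^ d * ((n : ℝ) / 2 ^ k)⌋ = ((2 ^ d * n / 2 ^ k : ℕ) : ℤ) := by
    rw [← Int.natCast_floor_eq_floor h0]
    congr 1
    have : (2:ℝ) ^ d * ((n : ℝ) / 2 ^ k) = ((2 ^ d * n : ℕ) : ℝ) / ((2 ^ k : ℕ) : ℝ) := by
      push_cast; ring
    rw [this, Nat.floor_div_eq_div]
  rw [hfl]
  norm_cast

lemma nu_nat_div (n k : ℕ) :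
    nu ((n:ℝ)/2^k) = ∑ d ∈ Finset.range (k+1), (d:ℝ) * ((n / 2^(k-d)) % 2 : ℕ) / 2^d := by
  unfold nu
  rw [tsum_eq_sum (s := Finset.range (k+1))]
  · apply Finset.sum_congr rfl
    intro d hd
    rw [Finset.mem_range] at hd
    rw [epsBit_nat_div]
    congr 3
    have h1 : 2 ^ k = 2 ^ d * 2 ^ (k - d) := by rw [← pow_add]; congr 1; omega
    rw [h1, Nat.mul_div_mul_left _ _ (by positivity)]
  · intro d hd
    rw [Finset.mem_range] at hd
    rw [epsBit_nat_div]
    have h1 : 2 ^ d = 2 ^ k * 2 ^ (d - k) := by rw [← pow_add]; congr 1; omega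
    have h2 : 2 ^ d * n / 2 ^ k = 2 ^ (d - k) * n := by
      rw [h1, mul_assoc, Nat.mul_div_cancel_left _ (by positivity)]
    rw [h2]
    obtain ⟨c, hc⟩ : 2 ∣ 2 ^ (d - k) * n :=
      Dvd.dvd.mul_right (dvd_pow_self 2 (by omega)) n
    have : 2 ^ (d - k) * n % 2 = 0 := by omega
    rw [this]
    simp

lemma sum2 (j : ℕ) : ∑ d ∈ Finset.range (j+3), (if 2 ≤ d then (d:ℝ)/2^d else 0)
    = 3/2 - (j+4)/2^(j+2) := by
  induction j with
  | zero => norm_num [Finset.sum_range_succ]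
  | succ i ih =>
      rw [show i + 1 + 3 = (i + 3) + 1 by ring, Finset.sum_range_succ, ih]
      have : (2:ℝ) ^ (i+3) ≠ 0 := by positivity
      rw [if_pos (by omega)]
      push_cast
      field_simp
      ring

theorem nu_proposal_cost (k : ℕ) (hk : 2 ≤ k) :
    nu (2 / 2 ^ k) + 2 * nu (((2 : ℝ) ^ (k - 1) - 1) / 2 ^ k)
      = 3 * ((2 : ℝ) ^ (k - 1) - 1) / 2 ^ (k - 1) := by
  obtain ⟨m, rfl⟩ : ∃ m, k = m + 2 := ⟨k - 2, by omega⟩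
  have hk1 : m + 2 - 1 = m + 1 := by omega
  rw [hk1]
  -- first term
  have e1 : (2:ℝ) / 2 ^ (m+2) = ((2:ℕ):ℝ) / 2 ^ (m+2) := by norm_num
  have h1 : nu (2 / 2 ^ (m+2)) = (m+1) / 2 ^ (m+1) := by
    rw [e1, nu_nat_div]
    rw [Finset.sum_eq_single_of_mem (m+1) (by simp)]
    · have : (m + 2) - (m + 1) = 1 := by omega
      rw [this]
      norm_num
    · intro d hd hne
      rw [Finset.mem_range] at hd
      rcases lt_or_ge d (m+1) with h | h
      · have : 2 / 2 ^ (m + 2 - d) = 0 := by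
          apply Nat.div_eq_of_lt
          calc 2 < 2 ^ 2 := by norm_num
            _ ≤ 2 ^ (m + 2 - d) := Nat.pow_le_pow_right (by norm_num) (by omega)
        rw [this]
        simp
      · have hd2 : d = m + 2 := by omega
        subst hd2
        norm_num
  -- second term
  have hpow : (1:ℕ) ≤ 2 ^ (m+1) := Nat.one_le_two_pow
  have e2 : ((2:ℝ) ^ (m+1) - 1) / 2 ^ (m+2) = ((2 ^ (m+1) - 1 : ℕ) : ℝ) / 2 ^ (m+2) := by
    push_cast [hpow]
    norm_num
  have h2 : nu (((2:ℝ) ^ (m+1) - 1) / 2 ^ (m+2)) = 3/2 - (m+4)/2^(m+2) := by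
    rw [e2, nu_nat_div, ← sum2 m, show m + 2 + 1 = m + 3 from rfl]
    apply Finset.sum_congr rfl
    intro d hd
    rw [Finset.mem_range] at hd
    rcases Nat.eq_zero_or_pos d with h0 | h1
    · subst h0
      simp
    · -- 1 ≤ d ≤ m+2
      have he : m + 2 - d ≤ m + 1 := by omega
      set e := m + 2 - d with hedef
      have hA : 2 ^ e * 2 ^ (m + 1 - e) = 2 ^ (m+1) := by
        rw [← pow_add]; congr 1; omega
      have hA1 : (1:ℕ) ≤ 2 ^ (m + 1 - e) := Nat.one_le_two_pow
      have hE1 : (1:ℕ) ≤ 2 ^ e := Nat.one_le_two_pow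
      have hsplit : 2 ^ (m+1) - 1 = 2 ^ e * (2 ^ (m + 1 - e) - 1) + (2 ^ e - 1) := by
        have hms : 2 ^ e * (2 ^ (m + 1 - e) - 1) = 2 ^ (m+1) - 2 ^ e := by
          rw [Nat.mul_sub, hA, mul_one]
        have h3 : 2 ^ e ≤ 2 ^ (m+1) := Nat.pow_le_pow_right (by norm_num) (by omega)
        omega
      have hdiv : (2 ^ (m+1) - 1) / 2 ^ e = 2 ^ (m + 1 - e) - 1 := by
        rw [hsplit, Nat.mul_add_div (by positivity), Nat.div_eq_of_lt (by omega)]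
        omega
      have hme : m + 1 - e = d - 1 := by omega
      rw [hdiv, hme]
      rcases lt_or_ge d 2 with h2d | h2d
      · have : d = 1 := by omega
        subst this
        norm_num
      · have : d - 1 = (d - 2) + 1 := by omega
        have hmod : (2 ^ (d-1) - 1) % 2 = 1 := by
          rw [this, pow_succ]
          have : (1:ℕ) ≤ 2 ^ (d-2) := Nat.one_le_two_pow
          omega
        rw [hmod, if_pos h2d]
        norm_num
  rw [h1, h2]
  have hp : (2:ℝ) ^ (m+1) ≠ 0 := by positivity
  rw [show m + 2 = (m+1) + 1 from rfl, pow_succ]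
  field_simp
  ring
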